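/- arXiv:2102.08850 — 4 statements merged into one kernel-verified Lean document; each statement's English description precedes it below -/
import Mathlib

section
/- Suppose 1 ≤ α < ∞ and α ≠ 2. An n × n real matrix A is an isometry of the L^α norm on ℝ^n (i.e., ‖Ax‖_α = ‖x‖_α for all x ∈ ℝ^n) if and only if A is a generalized permutation matrix, meaning there exist a permutation σ of {1,…,n} and signs α_i ∈ {−1, +1} such that (Az)_i = α_i z_{σ(i)} for all z and i. -/
/-!
Raising both sides to the power `α`, an isometry `A` preserves `∑ |xᵢ|^α`. Testing this on a basis
vector `e_j` shows that every column has `α`-norm `1`; testing on `e_j ± e_k` gives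
`∑ᵢ (|a + b|^α + |a - b|^α) = ∑ᵢ 2 (|a|^α + |b|^α)` with `a = A i j`, `b = A i k`.
Writing `|a ± b|^α = ((a ± b)^2)^(α/2)`, midpoint concavity (`α < 2`) or convexity (`α > 2`) of
`t ↦ t^(α/2)` together with strict sub- or superadditivity compares the summands termwise in one
direction, strictly when `a b ≠ 0`. Hence distinct columns have disjoint supports; nonzero columns
with disjoint supports force a permutation pattern, and the unit column norms force entries `±1`.
-/

open Real

namespace Real

lemma rpow_add_lt_add_rpow {q x y : ℝ} (hx : 0 < x) (hy : 0 < y) (hq1 : q < 1) :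
    (x + y) ^ q < x ^ q + y ^ q := by
  have hxy : 0 < x + y := add_pos hx hy
  have hpow : ∀ z : ℝ, 0 < z → z ^ q = z * z ^ (q - 1) := fun z hz => by
    rw [rpow_sub_one hz.ne', mul_div_cancel₀ _ hz.ne']
  rw [hpow _ hx, hpow _ hy, hpow _ hxy, add_mul]
  exact add_lt_add
    (mul_lt_mul_of_pos_left (rpow_lt_rpow_of_neg hx (lt_add_of_pos_right x hy) (by linarith)) hx)
    (mul_lt_mul_of_pos_left (rpow_lt_rpow_of_neg hy (lt_add_of_pos_left y hx) (by linarith)) hy)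

lemma add_rpow_lt_rpow_add {q x y : ℝ} (hx : 0 < x) (hy : 0 < y) (hq1 : 1 < q) :
    x ^ q + y ^ q < (x + y) ^ q := by
  have hxy : 0 < x + y := add_pos hx hy
  have hpow : ∀ z : ℝ, 0 < z → z ^ q = z * z ^ (q - 1) := fun z hz => by
    rw [rpow_sub_one hz.ne', mul_div_cancel₀ _ hz.ne']
  rw [hpow _ hx, hpow _ hy, hpow _ hxy, add_mul]
  exact add_lt_add
    (mul_lt_mul_of_pos_left (rpow_lt_rpow hx.le (lt_add_of_pos_right x hy) (by linarith)) hx)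
    (mul_lt_mul_of_pos_left (rpow_lt_rpow hy.le (lt_add_of_pos_left y hx) (by linarith)) hy)

lemma abs_rpow_eq_sq_rpow (x p : ℝ) : |x| ^ p = (x ^ 2) ^ (p / 2) := by
  rw [← sq_abs, ← rpow_natCast_mul (abs_nonneg x)]
  norm_num [mul_div_cancel₀]

lemma abs_add_rpow_add_abs_sub_rpow_le_sq_add_sq_rpow {p : ℝ} (hp0 : 0 ≤ p) (hp2 : p ≤ 2)
    (a b : ℝ) :
    |a + b| ^ p + |a - b| ^ p ≤ 2 * (a ^ 2 + b ^ 2) ^ (p / 2) := by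
  have h := (concaveOn_rpow (p := p / 2) (by positivity) (by linarith)).2
    (Set.mem_Ici.2 (sq_nonneg (a + b))) (Set.mem_Ici.2 (sq_nonneg (a - b)))
    (by norm_num : (0 : ℝ) ≤ 1 / 2) (by norm_num : (0 : ℝ) ≤ 1 / 2) (by norm_num)
  simp only [smul_eq_mul] at h
  rw [abs_rpow_eq_sq_rpow, abs_rpow_eq_sq_rpow]
  rw [show 1 / 2 * (a + b) ^ 2 + 1 / 2 * (a - b) ^ 2 = a ^ 2 + b ^ 2 by ring] at h
  linarith

lemma sq_add_sq_rpow_le_abs_add_rpow_add_abs_sub_rpow {p : ℝ} (hp2 : 2 ≤ p) (a b : ℝ) :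
    2 * (a ^ 2 + b ^ 2) ^ (p / 2) ≤ |a + b| ^ p + |a - b| ^ p := by
  have h := (convexOn_rpow (p := p / 2) (by linarith)).2
    (Set.mem_Ici.2 (sq_nonneg (a + b))) (Set.mem_Ici.2 (sq_nonneg (a - b)))
    (by norm_num : (0 : ℝ) ≤ 1 / 2) (by norm_num : (0 : ℝ) ≤ 1 / 2) (by norm_num)
  simp only [smul_eq_mul] at h
  rw [abs_rpow_eq_sq_rpow, abs_rpow_eq_sq_rpow]
  rw [show 1 / 2 * (a + b) ^ 2 + 1 / 2 * (a - b) ^ 2 = a ^ 2 + b ^ 2 by ring] at h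
  linarith

lemma abs_add_rpow_add_abs_sub_rpow_le {p : ℝ} (hp0 : 0 ≤ p) (hp2 : p ≤ 2) (a b : ℝ) :
    |a + b| ^ p + |a - b| ^ p ≤ 2 * (|a| ^ p + |b| ^ p) := by
  rw [abs_rpow_eq_sq_rpow a, abs_rpow_eq_sq_rpow b]
  have := rpow_add_le_add_rpow (sq_nonneg a) (sq_nonneg b) (by positivity : 0 ≤ p / 2) (by linarith)
  linarith [abs_add_rpow_add_abs_sub_rpow_le_sq_add_sq_rpow hp0 hp2 a b]

lemma abs_add_rpow_add_abs_sub_rpow_lt {p : ℝ} (hp0 : 0 ≤ p) (hp2 : p < 2) {a b : ℝ}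
    (ha : a ≠ 0) (hb : b ≠ 0) :
    |a + b| ^ p + |a - b| ^ p < 2 * (|a| ^ p + |b| ^ p) := by
  rw [abs_rpow_eq_sq_rpow a, abs_rpow_eq_sq_rpow b]
  have := rpow_add_lt_add_rpow (pow_two_pos_of_ne_zero ha) (pow_two_pos_of_ne_zero hb)
    (by linarith : p / 2 < 1)
  linarith [abs_add_rpow_add_abs_sub_rpow_le_sq_add_sq_rpow hp0 hp2.le a b]

lemma le_abs_add_rpow_add_abs_sub_rpow {p : ℝ} (hp2 : 2 ≤ p) (a b : ℝ) :
    2 * (|a| ^ p + |b| ^ p) ≤ |a + b| ^ p + |a - b| ^ p := by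
  rw [abs_rpow_eq_sq_rpow a, abs_rpow_eq_sq_rpow b]
  have := add_rpow_le_rpow_add (sq_nonneg a) (sq_nonneg b) (by linarith : 1 ≤ p / 2)
  linarith [sq_add_sq_rpow_le_abs_add_rpow_add_abs_sub_rpow hp2 a b]

lemma lt_abs_add_rpow_add_abs_sub_rpow {p : ℝ} (hp2 : 2 < p) {a b : ℝ} (ha : a ≠ 0) (hb : b ≠ 0) :
    2 * (|a| ^ p + |b| ^ p) < |a + b| ^ p + |a - b| ^ p := by
  rw [abs_rpow_eq_sq_rpow a, abs_rpow_eq_sq_rpow b]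
  have := add_rpow_lt_rpow_add (pow_two_pos_of_ne_zero ha) (pow_two_pos_of_ne_zero hb)
    (by linarith : 1 < p / 2)
  linarith [sq_add_sq_rpow_le_abs_add_rpow_add_abs_sub_rpow hp2.le a b]

end Real

namespace Matrix

variable {ι R : Type*} [Fintype ι]

lemma exists_perm_eq_zero_of_ne [Zero R] {A : Matrix ι ι R} (hcol : ∀ j, ∃ i, A i j ≠ 0)
    (hrow : ∀ i j k, A i j ≠ 0 → A i k ≠ 0 → j = k) :
    ∃ σ : Equiv.Perm ι, ∀ i j, j ≠ σ i → A i j = 0 := by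
  choose r hr using hcol
  have hr_inj : Function.Injective r := fun j k hjk => hrow (r j) j k (hr j) (hjk ▸ hr k)
  let e := Equiv.ofBijective r (Finite.injective_iff_bijective.1 hr_inj)
  refine ⟨e.symm, fun i j hj => not_not.1 fun hij => hj (hrow i j _ hij ?_)⟩
  convert hr (e.symm i)
  exact (e.apply_symm_apply i).symm

lemma mulVec_apply_eq_of_eq_zero {m : Type*} [NonUnitalNonAssocSemiring R] {A : Matrix m ι R}
    {i : m} {j : ι} (h : ∀ k, k ≠ j → A i k = 0) (z : ι → R) : (A *ᵥ z) i = A i j * z j :=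
  Fintype.sum_eq_single j fun k hk => by simp [h k hk]

end Matrix

section LpIsometry

open Finset
open scoped Matrix

variable {ι : Type*} [Fintype ι] {p : ℝ} {A : Matrix ι ι ℝ}

lemma sum_abs_rpow_mulVec_of_signed_perm (σ : Equiv.Perm ι) {ε : ι → ℝ} (hε : ∀ i, |ε i| = 1)
    (hA : ∀ z i, (A *ᵥ z) i = ε i * z (σ i)) (x : ι → ℝ) :
    ∑ i, |(A *ᵥ x) i| ^ p = ∑ i, |x i| ^ p := by
  simp_rw [hA, abs_mul, hε, one_mul]
  exact Equiv.sum_comp σ fun i => |x i| ^ p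

variable [DecidableEq ι]

lemma sum_abs_rpow_pi_single (hp : p ≠ 0) (j : ι) (c : ℝ) :
    ∑ i, |Pi.single j c i| ^ p = |c| ^ p := by
  rw [Fintype.sum_eq_single j fun i hi => by simp [Pi.single_eq_of_ne hi, zero_rpow hp]]
  simp

lemma sum_abs_rpow_pi_single_add_pi_single (hp : p ≠ 0) {j k : ι} (hjk : j ≠ k) (c d : ℝ) :
    ∑ i, |(Pi.single j c + Pi.single k d : ι → ℝ) i| ^ p = |c| ^ p + |d| ^ p := by
  rw [Fintype.sum_eq_add j k hjk fun i hi => by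
    simp [Pi.single_eq_of_ne hi.1, Pi.single_eq_of_ne hi.2, zero_rpow hp]]
  simp [Pi.single_eq_of_ne hjk, Pi.single_eq_of_ne hjk.symm]

lemma sum_abs_rpow_col_eq_one (hA : ∀ x, ∑ i, |(A *ᵥ x) i| ^ p = ∑ i, |x i| ^ p) (hp : p ≠ 0)
    (j : ι) : ∑ i, |A i j| ^ p = 1 := by
  simpa [Matrix.mulVec_single, sum_abs_rpow_pi_single hp] using hA (Pi.single j 1)

lemma sum_abs_rpow_col_add_smul_col (hA : ∀ x, ∑ i, |(A *ᵥ x) i| ^ p = ∑ i, |x i| ^ p)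
    (hp : p ≠ 0) {j k : ι} (hjk : j ≠ k) (s : ℝ) :
    ∑ i, |A i j + s * A i k| ^ p = 1 + |s| ^ p := by
  have h := hA (Pi.single j 1 + Pi.single k s)
  rw [sum_abs_rpow_pi_single_add_pi_single hp hjk, abs_one, one_rpow, Matrix.mulVec_add,
    Matrix.mulVec_single, Matrix.mulVec_single] at h
  simpa using h

lemma mul_eq_zero_of_isometry (hA : ∀ x, ∑ i, |(A *ᵥ x) i| ^ p = ∑ i, |x i| ^ p)
    (hp0 : 0 < p) (hp2 : p ≠ 2) {j k : ι} (hjk : j ≠ k) (i : ι) : A i j * A i k = 0 := by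
  have hsum : ∑ i, (|A i j + A i k| ^ p + |A i j - A i k| ^ p) =
      ∑ i, 2 * (|A i j| ^ p + |A i k| ^ p) := by
    have h₁ := sum_abs_rpow_col_add_smul_col hA hp0.ne' hjk 1
    have h₂ := sum_abs_rpow_col_add_smul_col hA hp0.ne' hjk (-1)
    simp only [one_mul, neg_one_mul, ← sub_eq_add_neg, abs_one, abs_neg, one_rpow] at h₁ h₂
    rw [sum_add_distrib, h₁, h₂, ← mul_sum, sum_add_distrib, sum_abs_rpow_col_eq_one hA hp0.ne',
      sum_abs_rpow_col_eq_one hA hp0.ne']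
    norm_num
  by_contra h
  obtain ⟨ha, hb⟩ := mul_ne_zero_iff.1 h
  rcases hp2.lt_or_gt with hlt | hgt
  · exact hsum.not_lt <| sum_lt_sum (fun i _ => abs_add_rpow_add_abs_sub_rpow_le hp0.le hlt.le _ _)
      ⟨i, mem_univ i, abs_add_rpow_add_abs_sub_rpow_lt hp0.le hlt ha hb⟩
  · exact hsum.not_gt <| sum_lt_sum (fun i _ => le_abs_add_rpow_add_abs_sub_rpow hgt.le _ _)
      ⟨i, mem_univ i, lt_abs_add_rpow_add_abs_sub_rpow hgt ha hb⟩

theorem exists_signed_perm_of_isometry (hA : ∀ x, ∑ i, |(A *ᵥ x) i| ^ p = ∑ i, |x i| ^ p)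
    (hp0 : 0 < p) (hp2 : p ≠ 2) :
    ∃ (σ : Equiv.Perm ι) (ε : ι → ℝ), (∀ i, ε i = 1 ∨ ε i = -1) ∧
      ∀ z i, (A *ᵥ z) i = ε i * z (σ i) := by
  have hcol := sum_abs_rpow_col_eq_one hA hp0.ne'
  obtain ⟨σ, hσ⟩ := Matrix.exists_perm_eq_zero_of_ne (A := A)
    (fun j => by
      by_contra! h
      simpa [h, zero_rpow hp0.ne'] using hcol j)
    (fun i j k hj hk => by
      by_contra hjk
      exact mul_ne_zero hj hk (mul_eq_zero_of_isometry hA hp0 hp2 hjk i))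
  have hdiag : ∀ i, |A i (σ i)| = 1 := fun i => by
    have h := hcol (σ i)
    rw [Fintype.sum_eq_single i fun i' hi' => by
      rw [hσ i' (σ i) (σ.injective.ne hi').symm, abs_zero, zero_rpow hp0.ne']] at h
    exact (rpow_left_inj (abs_nonneg _) zero_le_one hp0.ne').1 (h.trans (one_rpow p).symm)
  exact ⟨σ, fun i => A i (σ i), fun i => (abs_eq zero_le_one).1 (hdiag i),
    fun z i => Matrix.mulVec_apply_eq_of_eq_zero (hσ i) z⟩

end LpIsometry

/-- an n×n matrix is an isometry of the L^α norm (1 ≤ α < ∞, α ≠ 2)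
iff it is a generalized permutation matrix. -/
theorem stmt_3 (n : ℕ) (α : ℝ) (hα : 1 ≤ α) (hα2 : α ≠ 2)
    (A : Matrix (Fin n) (Fin n) ℝ) :
    (∀ x : Fin n → ℝ,
        (∑ i, |A.mulVec x i| ^ α) ^ (1 / α) = (∑ i, |x i| ^ α) ^ (1 / α))
    ↔ ∃ (σ : Equiv.Perm (Fin n)) (ε : Fin n → ℝ),
        (∀ i, ε i = 1 ∨ ε i = -1) ∧
        ∀ (z : Fin n → ℝ) (i : Fin n), A.mulVec z i = ε i * z (σ i) := by
  have hα0 : 0 < α := zero_lt_one.trans_le hα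
  have hnorm (x : Fin n → ℝ) :
      (∑ i, |A.mulVec x i| ^ α) ^ (1 / α) = (∑ i, |x i| ^ α) ^ (1 / α) ↔
        ∑ i, |A.mulVec x i| ^ α = ∑ i, |x i| ^ α :=
    rpow_left_inj (by positivity) (by positivity) (one_div_ne_zero hα0.ne')
  simp_rw [hnorm]
  refine ⟨fun hA => exists_signed_perm_of_isometry hA hα0 hα2, ?_⟩
  rintro ⟨σ, ε, hε, hA⟩
  exact sum_abs_rpow_mulVec_of_signed_perm σ (fun i => by rcases hε i with h | h <;> simp [h]) hA
end

section
/- Let Z be a convex body (a compact convex set with nonempty interior) in a normed vector space ℝ^N, and let h : Z → Z be a surjective isometry with respect to a norm-induced metric. Then h extends uniquely to an affine isometry of ℝ^N; in particular h is affine, i.e., h(z) = Az + b for some linear isometry A and vector b. -/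
/-!
Väisälä's proof of the Mazur–Ulam theorem localizes. The iterated metric midpoint sets of `x, y`
shrink to `midpoint x y`, and when the ball of radius `‖x - y‖ / 2` about `x` lies in `Z` they are
the same whether computed in `Z` or in the whole space; as `h` maps them to those of `h x, h y`, it
preserves this midpoint. The ball condition is transported by `h` because an isometric self-map of
a compact ball is onto. So near each interior point `h` preserves midpoints and distances, and
rescaling by powers of two extends it to a midpoint-preserving isometry of the whole space, which
is affine. These local affine extensions agree on overlaps, so by connectedness of the interior one
of them matches `h` on the interior, and by density on all of `Z`.
-/

open Metric Set Filter Topology Function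

section MidpointSet

variable {X Y : Type*}

section Pseudo

variable [PseudoMetricSpace X] [PseudoMetricSpace Y]

/-- The iterated metric midpoint sets of Väisälä's proof of the Mazur–Ulam theorem. -/
def midpointSet (x y : X) : ℕ → Set X
  | 0 => closedBall x (dist x y / 2) ∩ closedBall y (dist x y / 2)
  | n + 1 => {z ∈ midpointSet x y n |
      ∀ w ∈ midpointSet x y n, dist z w ≤ diam (midpointSet x y n) / 2}

theorem midpointSet_subset_zero (x y : X) : ∀ n, midpointSet x y n ⊆ midpointSet x y 0
  | 0 => subset_rfl
  | n + 1 => fun _ hz => midpointSet_subset_zero x y n hz.1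

theorem isBounded_midpointSet (x y : X) (n : ℕ) : Bornology.IsBounded (midpointSet x y n) :=
  isBounded_closedBall.subset ((midpointSet_subset_zero x y n).trans inter_subset_left)

theorem diam_midpointSet_le (x y : X) : ∀ n, diam (midpointSet x y n) ≤ dist x y / 2 ^ n
  | 0 => by
    rw [midpointSet, pow_zero, div_one]
    calc diam (closedBall x (dist x y / 2) ∩ closedBall y (dist x y / 2))
        ≤ diam (closedBall x (dist x y / 2)) := diam_mono inter_subset_left isBounded_closedBall
      _ ≤ 2 * (dist x y / 2) := diam_closedBall (by positivity)
      _ = dist x y := by ring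
  | n + 1 => by
    have hle : diam (midpointSet x y (n + 1)) ≤ diam (midpointSet x y n) / 2 :=
      diam_le_of_forall_dist_le (by positivity) fun _ hz w hw => hz.2 w hw.1
    calc diam (midpointSet x y (n + 1)) ≤ dist x y / 2 ^ n / 2 := by
          linarith [diam_midpointSet_le x y n]
      _ = dist x y / 2 ^ (n + 1) := by ring

theorem midpointSet_comm (x y : X) : ∀ n, midpointSet y x n = midpointSet x y n
  | 0 => by rw [midpointSet, midpointSet, dist_comm, inter_comm]
  | n + 1 => by rw [midpointSet, midpointSet, midpointSet_comm x y n]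

theorem Isometry.image_midpointSet {f : X → Y} (hf : Isometry f) {x y : X}
    (hrange : midpointSet (f x) (f y) 0 ⊆ range f) :
    ∀ n, f '' midpointSet x y n = midpointSet (f x) (f y) n
  | 0 => by
    have hpre : f ⁻¹' midpointSet (f x) (f y) 0 = midpointSet x y 0 := by
      ext z; simp [midpointSet, hf.dist_eq]
    rw [← hpre, image_preimage_eq_of_subset hrange]
  | n + 1 => by
    have ih := hf.image_midpointSet hrange n
    have hsep : midpointSet x y (n + 1) = midpointSet x y n ∩
        f ⁻¹' {u | ∀ w ∈ midpointSet x y n, dist u (f w) ≤ diam (midpointSet x y n) / 2} := by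
      ext z; simp [midpointSet, hf.dist_eq]
    rw [hsep, image_inter_preimage, midpointSet, ← ih, hf.diam_image]
    ext u; simp

end Pseudo

theorem eq_of_forall_mem_midpointSet [MetricSpace X] {x y p q : X}
    (hp : ∀ n, p ∈ midpointSet x y n) (hq : ∀ n, q ∈ midpointSet x y n) : p = q := by
  have hlim : Tendsto (fun n : ℕ => dist x y / 2 ^ n) atTop (𝓝 0) :=
    tendsto_const_nhds.div_atTop (tendsto_pow_atTop_atTop_of_one_lt one_lt_two)
  refine dist_le_zero.1 (ge_of_tendsto' hlim fun n => ?_)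
  exact (dist_le_diam_of_mem (isBounded_midpointSet x y n) (hp n) (hq n)).trans
    (diam_midpointSet_le x y n)

theorem midpoint_mem_midpointSet {E : Type*} [NormedAddCommGroup E] [NormedSpace ℝ E]
    (x y : E) : ∀ n, midpoint ℝ x y ∈ midpointSet x y n
  | 0 => by
    constructor <;> simp [mem_closedBall, dist_comm, div_eq_inv_mul]
  | n + 1 => by
    set σ := AffineIsometryEquiv.pointReflection ℝ (midpoint ℝ x y)
    have hσ : σ '' midpointSet x y n = midpointSet x y n := by
      rw [σ.isometry.image_midpointSet (by simp)]
      simpa [σ] using midpointSet_comm x y n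
    refine ⟨midpoint_mem_midpointSet x y n, fun w hw => ?_⟩
    have hσw : σ w ∈ midpointSet x y n := hσ ▸ mem_image_of_mem σ hw
    have := dist_le_diam_of_mem (isBounded_midpointSet x y n) hσw hw
    rw [AffineIsometryEquiv.dist_pointReflection_self_real] at this
    linarith

end MidpointSet

theorem Isometry.surjective_of_compactSpace {X : Type*} [MetricSpace X] [CompactSpace X]
    {f : X → X} (hf : Isometry f) : Surjective f := by
  intro x
  by_contra! hx
  obtain ⟨ε, hε, hball⟩ : ∃ ε > 0, ball x ε ⊆ (range f)ᶜ :=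
    Metric.isOpen_iff.1 (isCompact_range hf.continuous).isClosed.isOpen_compl x
      (by simpa using hx)
  obtain ⟨a, -, φ, hφ, hlim⟩ :=
    isCompact_univ.tendsto_subseq (x := fun n => f^[n] x) fun _ => mem_univ _
  obtain ⟨N, hN⟩ := Metric.tendsto_atTop.1 hlim (ε / 2) (half_pos hε)
  have hclose : dist (f^[φ N] x) (f^[φ (N + 1)] x) < ε := by
    have h₁ := hN N le_rfl
    have h₂ := hN (N + 1) N.le_succ
    simp only [comp_apply] at h₁ h₂
    linarith [dist_triangle_right (f^[φ N] x) (f^[φ (N + 1)] x) a]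
  obtain ⟨k, hk⟩ := Nat.exists_eq_add_of_lt (hφ N.lt_succ_self)
  have hiter : ∀ n, Isometry f^[n] := fun n => Nat.rec isometry_id (fun _ ih => ih.comp hf) n
  rw [hk, add_assoc, iterate_add_apply, (hiter _).dist_eq, iterate_succ_apply'] at hclose
  exact hball (mem_ball_comm.1 hclose) (mem_range_self _)

section NormedSpace

variable {E F : Type*} [NormedAddCommGroup E] [NormedAddCommGroup F]

theorem IsometryEquiv.closedBall_subset {Z : Set E} (hZ : IsCompact Z) (e : Z ≃ᵢ Z) {z : Z}
    {r : ℝ} (hz : closedBall (z : E) r ⊆ Z) : closedBall (e z : E) r ⊆ Z := by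
  have : CompactSpace (closedBall (z : E) r) :=
    isCompact_iff_compactSpace.1 (hZ.of_isClosed_subset isClosed_closedBall hz)
  let g : closedBall (z : E) r → closedBall (z : E) r := fun w =>
    ⟨(e ⟨w, hz w.2⟩ : E) - e z + z, by
      rw [mem_closedBall, dist_eq_norm, add_sub_cancel_right, ← dist_eq_norm, ← Subtype.dist_eq,
        e.dist_eq]
      exact w.2⟩
  have hg : Isometry g := Isometry.of_dist_eq fun a b => by
    simp only [g, Subtype.dist_eq, dist_add_right, dist_sub_right]
    rw [← Subtype.dist_eq, e.dist_eq, Subtype.dist_eq]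
  intro p hp
  obtain ⟨w, hw⟩ := hg.surjective_of_compactSpace
    ⟨p - e z + z, by rwa [mem_closedBall, dist_eq_norm, add_sub_cancel_right, ← dist_eq_norm]⟩
  have hp : (e ⟨w, hz w.2⟩ : E) = p := by simpa [g] using congrArg Subtype.val hw
  exact hp ▸ Subtype.prop _

variable [NormedSpace ℝ E] [NormedSpace ℝ F]

theorem IsometryEquiv.map_midpoint_of_closedBall_subset {Z : Set E} (hZ : IsCompact Z)
    (e : Z ≃ᵢ Z) {x y m : Z} (hx : closedBall (x : E) (dist x y / 2) ⊆ Z)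
    (hm : (m : E) = midpoint ℝ (x : E) y) :
    (e m : E) = midpoint ℝ (e x : E) (e y) := by
  have hmem : ∀ {a b p : Z}, closedBall (a : E) (dist a b / 2) ⊆ Z →
      (p : E) = midpoint ℝ (a : E) b → ∀ n, p ∈ midpointSet a b n := by
    intro a b p hab hp n
    have himage := isometry_subtype_coe.image_midpointSet (x := a) (y := b)
      (by rw [Subtype.range_coe]; exact inter_subset_left.trans hab) n
    rw [← Subtype.val_injective.mem_set_image, himage, hp]
    exact midpoint_mem_midpointSet _ _ n
  have hex : closedBall (e x : E) (dist (e x) (e y) / 2) ⊆ Z := by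
    rw [e.dist_eq]; exact e.closedBall_subset hZ hx
  have hmid : midpoint ℝ (e x : E) (e y) ∈ Z :=
    hex (by simp [mem_closedBall, Subtype.dist_eq, dist_comm, div_eq_inv_mul])
  have heq : e m = ⟨_, hmid⟩ := eq_of_forall_mem_midpointSet
    (fun n => e.isometry.image_midpointSet (by simp) n ▸ mem_image_of_mem e (hmem hx hm n))
    (hmem hex rfl)
  rw [heq]

theorem smul_midpoint {V : Type*} [AddCommGroup V] [Module ℝ V] (c : ℝ) (a b : V) :
    c • midpoint ℝ a b = midpoint ℝ (c • a) (c • b) := by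
  simp only [midpoint_eq_smul_add, smul_add, smul_comm c]

theorem inv_two_pow_smul_mem_ball {v : E} {n : ℕ} {ρ : ℝ} (hv : ‖v‖ < 2 ^ n * ρ) :
    ((2 : ℝ) ^ n)⁻¹ • v ∈ ball (0 : E) ρ := by
  rw [mem_ball_zero_iff, norm_smul, norm_inv, norm_pow, Real.norm_two,
    inv_mul_lt_iff₀ (by positivity)]
  exact hv

theorem two_pow_smul_apply_inv_two_pow_smul_eq {f : E → F} {ρ : ℝ}
    (hhalf : ∀ v ∈ ball (0 : E) ρ, f ((2 : ℝ)⁻¹ • v) = (2 : ℝ)⁻¹ • f v) {v : E} {m n : ℕ}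
    (hm : ‖v‖ < 2 ^ m * ρ) (hn : ‖v‖ < 2 ^ n * ρ) :
    (2 : ℝ) ^ m • f (((2 : ℝ) ^ m)⁻¹ • v) = (2 : ℝ) ^ n • f (((2 : ℝ) ^ n)⁻¹ • v) := by
  have hsucc : ∀ {k : ℕ}, ‖v‖ < 2 ^ k * ρ → (2 : ℝ) ^ (k + 1) • f (((2 : ℝ) ^ (k + 1))⁻¹ • v) =
      (2 : ℝ) ^ k • f (((2 : ℝ) ^ k)⁻¹ • v) := by
    intro k hk
    simp only [pow_succ, mul_inv, mul_comm ((2 : ℝ) ^ k)⁻¹, ← smul_smul,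
      hhalf _ (inv_two_pow_smul_mem_ball hk)]
    rw [smul_smul (2 : ℝ), mul_inv_cancel₀ two_ne_zero, one_smul]
  have hadd : ∀ {k : ℕ}, ‖v‖ < 2 ^ k * ρ → ∀ j, (2 : ℝ) ^ (k + j) • f (((2 : ℝ) ^ (k + j))⁻¹ • v) =
      (2 : ℝ) ^ k • f (((2 : ℝ) ^ k)⁻¹ • v) := by
    intro k hk j
    have hρ : 0 < ρ := pos_of_mul_pos_right ((norm_nonneg v).trans_lt hk) (by positivity)
    induction j with
    | zero => rfl
    | succ j ih =>
      rw [← add_assoc, hsucc, ih]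
      calc ‖v‖ < 2 ^ k * ρ := hk
        _ ≤ 2 ^ (k + j) * ρ := by gcongr <;> simp
  rw [← hadd hm n, add_comm, hadd hn]

/-- Rescaling by powers of `2` extends `f` from the ball to the whole space. -/
theorem exists_isometry_map_midpoint_eqOn_ball {f : E → F} {ρ : ℝ} (hρ : 0 < ρ) (h0 : f 0 = 0)
    (hmid : ∀ u ∈ ball (0 : E) ρ, ∀ v ∈ ball (0 : E) ρ,
      f (midpoint ℝ u v) = midpoint ℝ (f u) (f v))
    (hdist : ∀ u ∈ ball (0 : E) ρ, ∀ v ∈ ball (0 : E) ρ, dist (f u) (f v) = dist u v) :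
    ∃ g : E → F, Isometry g ∧ (∀ u v, g (midpoint ℝ u v) = midpoint ℝ (g u) (g v)) ∧
      EqOn f g (ball 0 ρ) := by
  have hhalf : ∀ v ∈ ball (0 : E) ρ, f ((2 : ℝ)⁻¹ • v) = (2 : ℝ)⁻¹ • f v := by
    intro v hv
    have := hmid 0 (mem_ball_self hρ) v hv
    rwa [midpoint_eq_smul_add, midpoint_eq_smul_add, h0, zero_add, zero_add, invOf_eq_inv] at this
  have hlarge : ∀ v : E, ∀ᶠ n in atTop, ‖v‖ < 2 ^ n * ρ := fun v =>
    ((tendsto_pow_atTop_atTop_of_one_lt one_lt_two).atTop_mul_const hρ).eventually_gt_atTop _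
  let g (v : E) : F :=
    (2 : ℝ) ^ (hlarge v).exists.choose • f (((2 : ℝ) ^ (hlarge v).exists.choose)⁻¹ • v)
  have hg : ∀ {n : ℕ} {v : E}, ‖v‖ < 2 ^ n * ρ → g v = (2 : ℝ) ^ n • f (((2 : ℝ) ^ n)⁻¹ • v) :=
    fun hv => two_pow_smul_apply_inv_two_pow_smul_eq hhalf (hlarge _).exists.choose_spec hv
  refine ⟨g, Isometry.of_dist_eq fun u v => ?_, fun u v => ?_, fun v hv => ?_⟩
  · obtain ⟨n, hu, hv⟩ := ((hlarge u).and (hlarge v)).exists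
    rw [hg hu, hg hv, dist_smul₀, hdist _ (inv_two_pow_smul_mem_ball hu) _
      (inv_two_pow_smul_mem_ball hv), dist_smul₀, ← mul_assoc, norm_inv,
      mul_inv_cancel₀ (by simp), one_mul]
  · obtain ⟨n, hu, hv, huv⟩ :=
      ((hlarge u).and ((hlarge v).and (hlarge (midpoint ℝ u v)))).exists
    rw [hg hu, hg hv, hg huv, smul_midpoint, hmid _ (inv_two_pow_smul_mem_ball hu) _
      (inv_two_pow_smul_mem_ball hv), smul_midpoint]
  · rw [hg (n := 0) (by simpa using hv)]
    simp

theorem exists_linearIsometry_eqOn_ball {f : E → F} {ρ : ℝ} (hρ : 0 < ρ) (h0 : f 0 = 0)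
    (hmid : ∀ u ∈ ball (0 : E) ρ, ∀ v ∈ ball (0 : E) ρ,
      f (midpoint ℝ u v) = midpoint ℝ (f u) (f v))
    (hdist : ∀ u ∈ ball (0 : E) ρ, ∀ v ∈ ball (0 : E) ρ, dist (f u) (f v) = dist u v) :
    ∃ A : E →ₗᵢ[ℝ] F, EqOn f A (ball 0 ρ) := by
  obtain ⟨g, hgiso, hgmid, hfg⟩ := exists_isometry_map_midpoint_eqOn_ball hρ h0 hmid hdist
  have hg0 : g 0 = 0 := (hfg (mem_ball_self hρ)).symm.trans h0
  exact ⟨{ (AddMonoidHom.ofMapMidpoint ℝ ℝ g hg0 hgmid).toRealLinearMap hgiso.continuous with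
    norm_map' := fun v => show ‖g v‖ = ‖v‖ by simpa [hg0] using hgiso.dist_eq v 0 }, hfg⟩

theorem exists_affineIsometry_eqOn_ball {f : E → F} {x₀ : E} {ρ : ℝ} (hρ : 0 < ρ)
    (hmid : ∀ u ∈ ball x₀ ρ, ∀ v ∈ ball x₀ ρ, f (midpoint ℝ u v) = midpoint ℝ (f u) (f v))
    (hdist : ∀ u ∈ ball x₀ ρ, ∀ v ∈ ball x₀ ρ, dist (f u) (f v) = dist u v) :
    ∃ A : E →ᵃⁱ[ℝ] F, EqOn f A (ball x₀ ρ) := by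
  have hball : ∀ {v : E}, v ∈ ball (0 : E) ρ → v + x₀ ∈ ball x₀ ρ := fun hv => by
    simpa [dist_eq_norm] using hv
  obtain ⟨A, hA⟩ := exists_linearIsometry_eqOn_ball (f := fun v => f (v + x₀) - f x₀) hρ
    (by simp) (fun u hu v hv => by
      have htrans := midpoint_vadd_midpoint (R := ℝ) u v x₀ x₀
      have hsub := midpoint_vsub_midpoint (R := ℝ) (f (u + x₀)) (f (v + x₀)) (f x₀) (f x₀)
      simp only [midpoint_self, vadd_eq_add, vsub_eq_sub] at htrans hsub
      simp only [htrans, hmid _ (hball hu) _ (hball hv), hsub])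
    (fun u hu v hv => by simpa using hdist _ (hball hu) _ (hball hv))
  refine ⟨(AffineIsometryEquiv.constVAdd ℝ F (f x₀)).toAffineIsometry.comp
    (A.toAffineIsometry.comp (AffineIsometryEquiv.vaddConst ℝ x₀).symm.toAffineIsometry),
    fun x hx => ?_⟩
  have := hA (show x - x₀ ∈ ball (0 : E) ρ by simpa [dist_eq_norm] using hx)
  simp only [sub_add_cancel] at this
  simp [← this]

theorem AffineIsometry.eq_of_eqOn_of_nonempty_interior {s : Set E} (hs : (interior s).Nonempty)
    {A B : E →ᵃⁱ[ℝ] F} (h : EqOn A B s) : A = B :=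
  AffineIsometry.toAffineMap_injective <| AffineMap.ext_on
    (top_unique <| (isOpen_interior.affineSpan_eq_top hs).ge.trans
      (affineSpan_mono ℝ interior_subset)) h

theorem IsPreconnected.eqOn_of_eventuallyEq_affineIsometry {U : Set E} (hU : IsPreconnected U)
    {f : E → F} (hloc : ∀ x ∈ U, ∃ B : E →ᵃⁱ[ℝ] F, f =ᶠ[𝓝 x] B) {A : E →ᵃⁱ[ℝ] F} {x₀ : E}
    (hx₀ : x₀ ∈ U) (hA : f =ᶠ[𝓝 x₀] A) : EqOn f A U := by
  suffices hU' : U ⊆ {x | f =ᶠ[𝓝 x] A} from fun x hx => (hU' hx).eq_of_nhds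
  refine hU.subset_of_closure_inter_subset isOpen_setOfPred_eventually_nhds ⟨x₀, hx₀, hA⟩ ?_
  rintro x ⟨hxA, hxU⟩
  obtain ⟨B, hB⟩ := hloc x hxU
  obtain ⟨p, hpB, hpA⟩ := mem_closure_iff_nhds.1 hxA _ hB.eventually_nhds
  have hAB : A = B := AffineIsometry.eq_of_eqOn_of_nonempty_interior
    ⟨p, mem_interior_iff_mem_nhds.2 (hpA.symm.trans hpB)⟩ fun _ hy => hy
  exact hAB ▸ hB

theorem IsometryEquiv.exists_affineIsometry_eventuallyEq {Z : Set E} (hZ : IsCompact Z)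
    (e : Z ≃ᵢ Z) {H : E → E} (hH : ∀ z : Z, H z = e z) {x : E} (hx : x ∈ interior Z) :
    ∃ A : E →ᵃⁱ[ℝ] E, H =ᶠ[𝓝 x] A := by
  obtain ⟨ε, hε, hεZ⟩ := Metric.mem_nhds_iff.1 (mem_interior_iff_mem_nhds.1 hx)
  have hZ' : ∀ {u}, u ∈ ball x (ε / 2) → u ∈ Z := fun hu =>
    hεZ (ball_subset_ball (by linarith) hu)
  have hH' : ∀ {u} (hu : u ∈ ball x (ε / 2)), H u = e ⟨u, hZ' hu⟩ := fun hu => hH ⟨_, hZ' hu⟩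
  have hmid : ∀ u ∈ ball x (ε / 2), ∀ v ∈ ball x (ε / 2),
      H (midpoint ℝ u v) = midpoint ℝ (H u) (H v) := by
    intro u hu v hv
    rw [hH' hu, hH' hv, hH' ((convex_ball x (ε / 2)).midpoint_mem hu hv)]
    refine e.map_midpoint_of_closedBall_subset hZ (fun w hw => hεZ ?_) rfl
    have huv : dist u v < ε := by
      linarith [dist_triangle_right u v x, mem_ball.1 hu, mem_ball.1 hv]
    have hwu : dist w u ≤ dist u v / 2 := hw
    exact mem_ball.2 (by linarith [dist_triangle w u x, mem_ball.1 hu])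
  have hdist : ∀ u ∈ ball x (ε / 2), ∀ v ∈ ball x (ε / 2), dist (H u) (H v) = dist u v := by
    intro u hu v hv
    rw [hH' hu, hH' hv, ← Subtype.dist_eq, e.dist_eq, Subtype.dist_eq]
  obtain ⟨A, hA⟩ := exists_affineIsometry_eqOn_ball (half_pos hε) hmid hdist
  exact ⟨A, eventuallyEq_of_mem (ball_mem_nhds x (half_pos hε)) hA⟩

end NormedSpace

theorem stmt_7_general {E : Type*} [NormedAddCommGroup E] [NormedSpace ℝ E]
    (Z : Set E)
    (hZc : IsCompact Z) (hZconv : Convex ℝ Z) (hZint : (interior Z).Nonempty)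
    (h : Z → Z) (hsurj : Function.Surjective h)
    (hiso : ∀ x y : Z, ‖(h x : E) - (h y : E)‖ = ‖(x : E) - (y : E)‖) :
    (∃! F : E →ᵃⁱ[ℝ] E, ∀ z : Z, (h z : E) = F z) ∧
    (∃ (A : E →ₗᵢ[ℝ] E) (b : E), ∀ z : Z, (h z : E) = A z + b) := by
  have hh : Isometry h := Isometry.of_dist_eq fun x y => by
    simpa [Subtype.dist_eq, dist_eq_norm] using hiso x y
  let e : Z ≃ᵢ Z := { Equiv.ofBijective h ⟨hh.injective, hsurj⟩ with isometry_toFun := hh }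
  let H : E → E := extend ((↑) : Z → E) (fun z => (h z : E)) id
  have hH : ∀ z : Z, H z = e z := Subtype.val_injective.extend_apply _ _
  obtain ⟨z₀, hz₀⟩ := hZint
  obtain ⟨F, hF⟩ := e.exists_affineIsometry_eventuallyEq hZc hH hz₀
  have hFint : EqOn H F (interior Z) :=
    hZconv.interior.isPreconnected.eqOn_of_eventuallyEq_affineIsometry
      (fun _ hx => e.exists_affineIsometry_eventuallyEq hZc hH hx) hz₀ hF
  have hHcont : ContinuousOn H Z := by
    rw [continuousOn_iff_continuous_domRestrict]
    exact (continuous_subtype_val.comp e.continuous).congr fun z => (hH z).symm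
  have hFZ : EqOn H F Z := hFint.of_subset_closure hHcont F.continuous.continuousOn
    interior_subset (hZconv.closure_interior_eq_closure_of_nonempty_interior ⟨z₀, hz₀⟩ ▸
      subset_closure)
  have hhF : ∀ z : Z, (h z : E) = F z := fun z => (hH z).symm.trans (hFZ z.2)
  refine ⟨⟨F, hhF, fun G hG => AffineIsometry.eq_of_eqOn_of_nonempty_interior ⟨z₀, hz₀⟩
    fun z hz => ?_⟩, F.linearIsometry, F 0, fun z => ?_⟩
  · rw [← hG ⟨z, hz⟩, hhF]
  · simpa [hhF] using F.map_vadd 0 (z : E)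

/-- Mankiewicz: a surjective isometry of a convex body in a
finite-dimensional real normed space extends uniquely to an affine isometry;
in particular it is affine, h z = A z + b. -/
theorem stmt_7 {E : Type*} [NormedAddCommGroup E] [NormedSpace ℝ E]
    [FiniteDimensional ℝ E] (Z : Set E)
    (hZc : IsCompact Z) (hZconv : Convex ℝ Z) (hZint : (interior Z).Nonempty)
    (h : Z → Z) (hsurj : Function.Surjective h)
    (hiso : ∀ x y : Z, ‖(h x : E) - (h y : E)‖ = ‖(x : E) - (y : E)‖) :
    (∃! F : E →ᵃⁱ[ℝ] E, ∀ z : Z, (h z : E) = F z) ∧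
    (∃ (A : E →ₗᵢ[ℝ] E) (b : E), ∀ z : Z, (h z : E) = A z + b) :=
  stmt_7_general Z hZc hZconv hZint h hsurj hiso
end

section
/- Let Z be a convex body in ℝ^N with an L^α-norm metric for α ≥ 1, α ≠ 2, and let h : Z → Z be a differentiable isometry of Z into itself up to a constant rescaling factor r > 0, i.e., δ(z, z̃) = δ(h(z)/r, h(z̃)/r) where δ(x, y) = ‖x − y‖_α. Then h is the composition of a rescaling by r, an input-independent permutation of coordinates, and coordinate-wise sign flips (possibly followed by a translation). -/
/-!
At an interior point of `Z` the derivative of `h`, divided by `r`, is a linear map `L` preserving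
`∑ i, |v i| ^ α`, hence also the coordinate sum of the Clarkson defect
`|s + t| ^ α + |s - t| ^ α - 2 * (|s| ^ α + |t| ^ α)`. For `α ≠ 2` every such defect has the sign
of `α - 2`, strictly unless `s * t = 0`, so `L` maps disjointly supported vectors to disjointly
supported ones and is therefore a signed permutation. Each directional derivative of each
coordinate of `h` thus takes finitely many values on `interior Z`; by Darboux's theorem it is
constant along segments, so `h` is affine on `interior Z`, and by continuity on
`Z ⊆ closure (interior Z)`.
-/

open Real Set Filter Topology

namespace Real

theorem self_mul_rpow_sub_one {x : ℝ} (hx : x ≠ 0) (q : ℝ) : x * x ^ (q - 1) = x ^ q := by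
  rw [rpow_sub_one hx, mul_div_cancel₀ _ hx]

theorem rpow_add_rpow_lt_add_rpow {q a b : ℝ} (hq : 1 < q) (ha : 0 < a) (hb : 0 < b) :
    a ^ q + b ^ q < (a + b) ^ q := by
  have hab : 0 < a + b := by linarith
  have hqa : a ^ (q - 1) < (a + b) ^ (q - 1) := rpow_lt_rpow ha.le (by linarith) (by linarith)
  have hqb : b ^ (q - 1) < (a + b) ^ (q - 1) := rpow_lt_rpow hb.le (by linarith) (by linarith)
  rw [← self_mul_rpow_sub_one ha.ne', ← self_mul_rpow_sub_one hb.ne',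
    ← self_mul_rpow_sub_one hab.ne', add_mul]
  exact add_lt_add (mul_lt_mul_of_pos_left hqa ha) (mul_lt_mul_of_pos_left hqb hb)

theorem add_rpow_lt_rpow_add_rpow {q a b : ℝ} (hq : q < 1) (ha : 0 < a) (hb : 0 < b) :
    (a + b) ^ q < a ^ q + b ^ q := by
  have hab : 0 < a + b := by linarith
  have hqa : (a + b) ^ (q - 1) < a ^ (q - 1) := rpow_lt_rpow_of_neg ha (by linarith) (by linarith)
  have hqb : (a + b) ^ (q - 1) < b ^ (q - 1) := rpow_lt_rpow_of_neg hb (by linarith) (by linarith)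
  rw [← self_mul_rpow_sub_one ha.ne', ← self_mul_rpow_sub_one hb.ne',
    ← self_mul_rpow_sub_one hab.ne', add_mul]
  exact add_lt_add (mul_lt_mul_of_pos_left hqa ha) (mul_lt_mul_of_pos_left hqb hb)

theorem abs_rpow_eq_sq_rpow_s8 (α s : ℝ) : |s| ^ α = (s ^ 2) ^ (α / 2) := by
  rw [← sq_abs, ← rpow_natCast, ← rpow_mul (abs_nonneg s)]
  ring_nf

end Real

noncomputable def clarksonDefect (α s t : ℝ) : ℝ :=
  |s + t| ^ α + |s - t| ^ α - 2 * (|s| ^ α + |t| ^ α)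

theorem clarksonDefect_eq_zero {α s t : ℝ} (hα : α ≠ 0) (hst : s * t = 0) :
    clarksonDefect α s t = 0 := by
  rcases mul_eq_zero.1 hst with rfl | rfl <;>
    simp [clarksonDefect, abs_neg, zero_rpow hα] <;> ring

theorem mul_clarksonDefect_pos {α s t : ℝ} (hα : 0 < α) (hα2 : α ≠ 2) (hs : s ≠ 0) (ht : t ≠ 0) :
    0 < (α - 2) * clarksonDefect α s t := by
  have hs2 : 0 < s ^ 2 := by positivity
  have ht2 : 0 < t ^ 2 := by positivity
  have hmidpoint : ∀ {f : ℝ → ℝ}, ConvexOn ℝ (Ici 0) f →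
      2 * f (s ^ 2 + t ^ 2) ≤ f ((s + t) ^ 2) + f ((s - t) ^ 2) := fun hf => by
    have := hf.2 (mem_Ici.2 (sq_nonneg (s + t))) (mem_Ici.2 (sq_nonneg (s - t)))
      (by norm_num : (0 : ℝ) ≤ 1 / 2) (by norm_num : (0 : ℝ) ≤ 1 / 2) (by norm_num)
    simp only [smul_eq_mul] at this
    rw [show 1 / 2 * (s + t) ^ 2 + 1 / 2 * (s - t) ^ 2 = s ^ 2 + t ^ 2 by ring] at this
    linarith
  simp only [clarksonDefect, abs_rpow_eq_sq_rpow_s8 α]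
  rcases hα2.lt_or_gt with hlt | hgt
  · have hconc := hmidpoint (concaveOn_rpow (p := α / 2) (by positivity) (by linarith)).neg
    have hsub := add_rpow_lt_rpow_add_rpow (q := α / 2) (by linarith) hs2 ht2
    simp only [Pi.neg_apply] at hconc
    nlinarith
  · have hconv := hmidpoint (convexOn_rpow (p := α / 2) (by linarith))
    have hsup := rpow_add_rpow_lt_add_rpow (q := α / 2) (by linarith) hs2 ht2
    nlinarith

theorem mul_clarksonDefect_nonneg {α : ℝ} (hα : 0 < α) (s t : ℝ) :
    0 ≤ (α - 2) * clarksonDefect α s t := by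
  rcases eq_or_ne α 2 with rfl | hα2
  · simp
  by_cases hst : s * t = 0
  · simp [clarksonDefect_eq_zero hα.ne' hst]
  · obtain ⟨hs, ht⟩ := mul_ne_zero_iff.1 hst
    exact (mul_clarksonDefect_pos hα hα2 hs ht).le

section SignedPermutation

variable {ι : Type*} [Fintype ι] {α : ℝ}

theorem sum_abs_rpow_smul (α t : ℝ) (x : ι → ℝ) :
    ∑ i, |(t • x) i| ^ α = |t| ^ α * ∑ i, |x i| ^ α := by
  simp only [Finset.mul_sum, Pi.smul_apply, smul_eq_mul, abs_mul,
    mul_rpow (abs_nonneg _) (abs_nonneg _)]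

theorem sum_clarksonDefect_map (L : (ι → ℝ) →ₗ[ℝ] (ι → ℝ))
    (hL : ∀ v, ∑ i, |L v i| ^ α = ∑ i, |v i| ^ α) (x y : ι → ℝ) :
    ∑ i, clarksonDefect α (L x i) (L y i) = ∑ i, clarksonDefect α (x i) (y i) := by
  have hadd := hL (x + y)
  have hsub := hL (x - y)
  simp only [map_add, map_sub, Pi.add_apply, Pi.sub_apply] at hadd hsub
  simp only [clarksonDefect, Finset.sum_sub_distrib, Finset.sum_add_distrib, ← Finset.mul_sum,
    hadd, hsub, hL]

theorem map_mul_map_eq_zero (hα : 0 < α) (hα2 : α ≠ 2) (L : (ι → ℝ) →ₗ[ℝ] (ι → ℝ))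
    (hL : ∀ v, ∑ i, |L v i| ^ α = ∑ i, |v i| ^ α) {x y : ι → ℝ} (hxy : ∀ i, x i * y i = 0)
    (i : ι) : L x i * L y i = 0 := by
  have hsum : ∑ i, (α - 2) * clarksonDefect α (L x i) (L y i) = 0 := by
    rw [← Finset.mul_sum, sum_clarksonDefect_map L hL,
      Finset.sum_eq_zero fun i _ => clarksonDefect_eq_zero hα.ne' (hxy i), mul_zero]
  have hi := (Finset.sum_eq_zero_iff_of_nonneg fun i _ => mul_clarksonDefect_nonneg hα _ _).1
    hsum i (Finset.mem_univ i)
  by_contra hne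
  obtain ⟨hx, hy⟩ := mul_ne_zero_iff.1 hne
  exact (mul_clarksonDefect_pos hα hα2 hx hy).ne' hi

theorem exists_perm_of_sum_abs_rpow_map_eq (hα : 0 < α) (hα2 : α ≠ 2)
    (L : (ι → ℝ) →ₗ[ℝ] (ι → ℝ)) (hL : ∀ v, ∑ i, |L v i| ^ α = ∑ i, |v i| ^ α) :
    ∃ (σ : Equiv.Perm ι) (ε : ι → ℝ), (∀ i, ε i = 1 ∨ ε i = -1) ∧
      ∀ v i, L v i = ε i * v (σ i) := by
  classical
  set c : ι → ι → ℝ := fun j => L fun k => if j = k then 1 else 0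
  have hc_norm : ∀ j, ∑ i, |c j i| ^ α = 1 := fun j => by
    simp [c, hL, apply_ite, zero_rpow hα.ne']
  have hc_disj : ∀ j k, j ≠ k → ∀ i, c j i * c k i = 0 := fun j k hjk =>
    map_mul_map_eq_zero hα hα2 L hL fun i => by
      rcases eq_or_ne j i with rfl | hji
      · simp [hjk.symm]
      · simp [hji]
  have hc_ne : ∀ j, ∃ i, c j i ≠ 0 := fun j => by
    by_contra! h0
    simpa [h0, zero_rpow hα.ne'] using hc_norm j
  choose τ hτ using hc_ne
  have hτ_inj : Function.Injective τ := fun j k hjk => by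
    by_contra hne
    exact mul_ne_zero (hτ j) (hjk ▸ hτ k) (hc_disj j k hne (τ j))
  let e := Equiv.ofBijective τ (Finite.injective_iff_bijective.1 hτ_inj)
  have hc_supp : ∀ j i, i ≠ τ j → c j i = 0 := fun j i hi => by
    obtain ⟨k, rfl⟩ := e.surjective i
    have hkj : j ≠ k := fun h => hi (h ▸ rfl)
    exact (mul_eq_zero.1 (hc_disj j k hkj (τ k))).resolve_right (hτ k)
  have hc_abs : ∀ j, |c j (τ j)| = 1 := fun j => by
    have := hc_norm j
    rw [Finset.sum_eq_single (τ j) (fun i _ hi => by simp [hc_supp j i hi, zero_rpow hα.ne'])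
      (by simp)] at this
    exact (rpow_left_inj (abs_nonneg _) zero_le_one hα.ne').1 (this.trans (one_rpow α).symm)
  refine ⟨e.symm, fun i => c (e.symm i) i, fun i => ?_, fun v i => ?_⟩
  · have := hc_abs (e.symm i)
    rwa [show τ (e.symm i) = i from e.apply_symm_apply i, abs_eq zero_le_one] at this
  · rw [L.pi_apply_eq_sum_univ v, Finset.sum_apply, Finset.sum_eq_single (e.symm i)]
    · simp [c, mul_comm]
    · intro j _ hj
      have hij : i ≠ τ j := fun h => hj (by simp [h, e])
      simp only [Pi.smul_apply, smul_eq_mul]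
      exact mul_eq_zero_of_right _ (hc_supp j i hij)
    · simp

end SignedPermutation

section Calculus

variable {E F : Type*} [NormedAddCommGroup E] [NormedSpace ℝ E] [NormedAddCommGroup F]
  [NormedSpace ℝ F]

theorem HasFDerivAt.eq_mul_of_homogeneous {f : E → F} {f' : E →L[ℝ] F} {z : E}
    (hf : HasFDerivAt f f' z) {Φ : E → ℝ} {Ψ : F → ℝ} {α c : ℝ}
    (hΦ : ∀ (t : ℝ) v, Φ (t • v) = |t| ^ α * Φ v) (hΨ : ∀ (t : ℝ) w, Ψ (t • w) = |t| ^ α * Ψ w)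
    (hΨc : Continuous Ψ) (hfz : ∀ᶠ y in 𝓝 z, Ψ (f y - f z) = c * Φ (y - z)) (v : E) :
    Ψ (f' v) = c * Φ v := by
  have hline : HasDerivAt (fun t : ℝ => f (z + t • v)) (f' v) 0 :=
    hf.comp_hasDerivAt_of_eq 0 (by simpa using ((hasDerivAt_id (0 : ℝ)).smul_const v).const_add z)
      (by simp)
  have hlim := (hΨc.tendsto _).comp (hasDerivAt_iff_tendsto_slope.1 hline)
  refine tendsto_nhds_unique hlim (tendsto_const_nhds.congr' ?_)
  have hnear : ∀ᶠ t : ℝ in 𝓝 0, Ψ (f (z + t • v) - f z) = c * Φ (t • v) := by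
    have hcont : Tendsto (fun t : ℝ => z + t • v) (𝓝 0) (𝓝 z) :=
      Continuous.tendsto' (by fun_prop) _ _ (by simp)
    simpa using hcont.eventually hfz
  filter_upwards [nhdsWithin_le_nhds hnear, self_mem_nhdsWithin] with t ht (htne : t ≠ 0)
  have ht' : 0 < |t| ^ α := rpow_pos_of_pos (abs_pos.2 htne) α
  simp only [Function.comp_apply, slope_def_module, sub_zero, zero_smul, add_zero, hΨ, ht, hΦ,
    abs_inv, inv_rpow (abs_nonneg t)]
  field_simp

end Calculus

section Darboux

theorem Set.Finite.subsingleton_of_convex {s : Set ℝ} (hs : s.Finite) (hc : Convex ℝ s) :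
    s.Subsingleton := by
  intro x hx y hy
  by_contra hne
  rcases lt_or_gt_of_ne hne with hxy | hxy
  · exact Icc_infinite hxy (hs.subset (hc.ordConnected.out hx hy))
  · exact Icc_infinite hxy (hs.subset (hc.ordConnected.out hy hx))

theorem Convex.eq_add_mul_sub_of_finite_image_deriv {g g' : ℝ → ℝ} {I : Set ℝ} (hI : Convex ℝ I)
    (hg : ∀ t ∈ I, HasDerivWithinAt g (g' t) I t) (hfin : (g' '' I).Finite) {a b : ℝ}
    (ha : a ∈ I) (hb : b ∈ I) : g b = g a + g' a * (b - a) := by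
  have hconst : ∀ t ∈ I, g' t = g' a := fun t ht =>
    hfin.subsingleton_of_convex (hI.image_hasDerivWithinAt hg) (mem_image_of_mem _ ht)
      (mem_image_of_mem _ ha)
  have hzero : ∀ t ∈ I, HasDerivWithinAt (fun t => g t - g' a * t) 0 I t := fun t ht => by
    simpa [hconst t ht] using (hg t ht).fun_sub ((hasDerivWithinAt_id t I).const_mul (g' a))
  have := hI.norm_image_sub_le_of_norm_hasDerivWithin_le (C := 0) hzero (fun _ _ => by simp) ha hb
  simp only [norm_le_zero_iff, zero_mul, sub_eq_zero] at this
  linarith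

variable {E : Type*} [NormedAddCommGroup E] [NormedSpace ℝ E]

theorem Convex.eq_add_of_finite_image_fderiv {f : E → ℝ} {f' : E → E →L[ℝ] ℝ} {U : Set E}
    (hU : Convex ℝ U) (hf : ∀ z ∈ U, HasFDerivAt f (f' z) z)
    (hfin : ∀ v, ((fun z => f' z v) '' U).Finite) {z w : E} (hz : z ∈ U) (hw : w ∈ U) :
    f w = f z + f' z (w - z) := by
  let ℓ : ℝ →ᵃ[ℝ] E := AffineMap.lineMap z w
  have := (hU.affine_preimage ℓ).eq_add_mul_sub_of_finite_image_deriv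
    (g := f ∘ ℓ) (g' := fun t => f' (ℓ t) (w - z))
    (fun t ht => ((hf _ ht).comp_hasDerivAt t AffineMap.hasDerivAt_lineMap).hasDerivWithinAt)
    ((hfin (w - z)).subset (image_subset_iff.2 fun t ht => mem_image_of_mem _ ht))
    (a := 0) (b := 1) (by simpa [ℓ] using hz) (by simpa [ℓ] using hw)
  simpa [ℓ] using this

end Darboux

section Isometry

variable {ι : Type*} [Fintype ι] {α r : ℝ}

theorem sum_abs_rpow_sub_eq_of_rpow_eq (hα : 0 < α) (hr : 0 < r) {x x' y y' : ι → ℝ}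
    (hxy : (∑ i, |x i - x' i| ^ α) ^ (1 / α) = (∑ i, |y i / r - y' i / r| ^ α) ^ (1 / α)) :
    ∑ i, |y i - y' i| ^ α = r ^ α * ∑ i, |x i - x' i| ^ α := by
  have hscale : ∑ i, |y i / r - y' i / r| ^ α = r⁻¹ ^ α * ∑ i, |y i - y' i| ^ α := by
    rw [← abs_of_pos (inv_pos.2 hr), ← sum_abs_rpow_smul]
    simp only [Pi.smul_apply, smul_eq_mul, div_eq_inv_mul, mul_sub]
  rw [rpow_left_inj (by positivity) (by positivity) (by positivity), hscale] at hxy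
  rw [hxy, ← mul_assoc, ← mul_rpow hr.le (inv_pos.2 hr).le, mul_inv_cancel₀ hr.ne', one_rpow,
    one_mul]

theorem exists_perm_fderiv_apply_eq_mul (hα : 0 < α) (hα2 : α ≠ 2) (hr : 0 < r)
    {h : (ι → ℝ) → (ι → ℝ)} {z : ι → ℝ} (hd : DifferentiableAt ℝ h z)
    (hiso : ∀ᶠ y in 𝓝 z, ∑ i, |h y i - h z i| ^ α = r ^ α * ∑ i, |y i - z i| ^ α) :
    ∃ (σ : Equiv.Perm ι) (ε : ι → ℝ), (∀ i, ε i = 1 ∨ ε i = -1) ∧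
      ∀ v i, fderiv ℝ h z v i = r * (ε i * v (σ i)) := by
  have hcont : Continuous fun x : ι → ℝ => ∑ i, |x i| ^ α :=
    continuous_finsetSum _ fun i _ => (continuous_apply i).abs.rpow_const fun _ => Or.inr hα.le
  have hpres := hd.hasFDerivAt.eq_mul_of_homogeneous (Φ := fun x => ∑ i, |x i| ^ α)
    (sum_abs_rpow_smul α) (sum_abs_rpow_smul α) hcont hiso
  obtain ⟨σ, ε, hε, hL⟩ := exists_perm_of_sum_abs_rpow_map_eq hα hα2
    (r⁻¹ • fderiv ℝ h z).toLinearMap fun v => by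
      rw [ContinuousLinearMap.coe_coe, FunLike.coe_smul, Pi.smul_apply, sum_abs_rpow_smul,
        hpres, abs_of_pos (inv_pos.2 hr), ← mul_assoc, ← mul_rpow (inv_pos.2 hr).le hr.le,
        inv_mul_cancel₀ hr.ne', one_rpow, one_mul]
  refine ⟨σ, ε, hε, fun v i => ?_⟩
  rw [← hL v i]
  simp [hr.ne']

theorem finite_image_apply_of_forall_perm {β : Type*} {A : β → (ι → ℝ) → ι → ℝ} {U : Set β}
    (hA : ∀ z ∈ U, ∃ (σ : Equiv.Perm ι) (ε : ι → ℝ), (∀ i, ε i = 1 ∨ ε i = -1) ∧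
      ∀ v i, A z v i = r * (ε i * v (σ i))) (v : ι → ℝ) (i : ι) :
    ((fun z => A z v i) '' U).Finite :=
  ((finite_range fun j => r * v j).union (finite_range fun j => -(r * v j))).subset <| by
    rintro _ ⟨z, hz, rfl⟩
    obtain ⟨σ, ε, hε, hA⟩ := hA z hz
    rcases hε i with he | he
    · exact Or.inl ⟨σ i, by simp [hA, he]⟩
    · exact Or.inr ⟨σ i, by simp [hA, he]⟩

end Isometry

theorem stmt_8_general (N : ℕ) (α : ℝ) (hα : 1 ≤ α) (hα2 : α ≠ 2) (r : ℝ) (hr : 0 < r)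
    (Z : Set (Fin N → ℝ)) (hZconv : Convex ℝ Z)
    (hZint : (interior Z).Nonempty)
    (h : (Fin N → ℝ) → (Fin N → ℝ))
    (hdiff : DifferentiableOn ℝ h Z)
    (hiso : ∀ z ∈ Z, ∀ z' ∈ Z,
      (∑ i, |z i - z' i| ^ α) ^ (1 / α)
        = (∑ i, |h z i / r - h z' i / r| ^ α) ^ (1 / α)) :
    ∃ (σ : Equiv.Perm (Fin N)) (ε : Fin N → ℝ) (b : Fin N → ℝ),
      (∀ i, ε i = 1 ∨ ε i = -1) ∧
      ∀ z ∈ Z, ∀ i, h z i = r * (ε i * z (σ i)) + b i := by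
  have hα0 : 0 < α := by linarith
  have hdiffAt : ∀ z ∈ interior Z, DifferentiableAt ℝ h z := fun z hz =>
    hdiff.differentiableAt (mem_interior_iff_mem_nhds.1 hz)
  have hderiv : ∀ z ∈ interior Z, ∃ (σ : Equiv.Perm (Fin N)) (ε : Fin N → ℝ),
      (∀ i, ε i = 1 ∨ ε i = -1) ∧ ∀ v i, fderiv ℝ h z v i = r * (ε i * v (σ i)) := fun z hz => by
    refine exists_perm_fderiv_apply_eq_mul hα0 hα2 hr (hdiffAt z hz) ?_
    filter_upwards [mem_interior_iff_mem_nhds.1 hz] with y hy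
    exact sum_abs_rpow_sub_eq_of_rpow_eq hα0 hr (hiso y hy z (interior_subset hz))
  obtain ⟨z₀, hz₀⟩ := hZint
  obtain ⟨σ, ε, hε, hz₀'⟩ := hderiv z₀ hz₀
  set b : Fin N → ℝ := fun i => h z₀ i - r * (ε i * z₀ (σ i))
  have haffine : EqOn h (fun z i => r * (ε i * z (σ i)) + b i) (interior Z) := fun w hw => by
    funext i
    have := hZconv.interior.eq_add_of_finite_image_fderiv (f := fun z => h z i)
      (fun z hz => hasFDerivAt_pi'.1 (hdiffAt z hz).hasFDerivAt i)
      (fun v => finite_image_apply_of_forall_perm hderiv v i) hz₀ hw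
    simp only [ContinuousLinearMap.comp_apply, ContinuousLinearMap.proj_apply, hz₀'] at this
    simp only [this, b, Pi.sub_apply]
    ring
  refine ⟨σ, ε, b, hε, fun z hz => congrFun (haffine.of_subset_closure hdiff.continuousOn
    (by fun_prop) interior_subset ?_ hz)⟩
  rw [hZconv.closure_interior_eq_closure_of_nonempty_interior ⟨z₀, hz₀⟩]
  exact subset_closure

/-- a differentiable isometry-up-to-rescaling of a convex body in
ℝ^N w.r.t. an L^α metric (α ≥ 1, α ≠ 2) is a rescaled generalized permutation
(permutation, sign flips) possibly followed by a translation. -/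
theorem stmt_8 (N : ℕ) (α : ℝ) (hα : 1 ≤ α) (hα2 : α ≠ 2) (r : ℝ) (hr : 0 < r)
    (Z : Set (Fin N → ℝ)) (hZc : IsCompact Z) (hZconv : Convex ℝ Z)
    (hZint : (interior Z).Nonempty)
    (h : (Fin N → ℝ) → (Fin N → ℝ)) (hmap : Set.MapsTo h Z Z)
    (hdiff : DifferentiableOn ℝ h Z)
    (hiso : ∀ z ∈ Z, ∀ z' ∈ Z,
      (∑ i, |z i - z' i| ^ α) ^ (1 / α)
        = (∑ i, |h z i / r - h z' i / r| ^ α) ^ (1 / α)) :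
    ∃ (σ : Equiv.Perm (Fin N)) (ε : Fin N → ℝ) (b : Fin N → ℝ),
      (∀ i, ε i = 1 ∨ ε i = -1) ∧
      ∀ z ∈ Z, ∀ i, h z i = r * (ε i * z (σ i)) + b i :=
  stmt_8_general N α hα hα2 r hr Z hZconv hZint h hdiff hiso
end

section
/- Let g : Z → X be injective and differentiable, with Z = S^{N-1}, and let f : X → S^{N-1}_{√κ} be differentiable such that h = f ∘ g satisfies κ zᵀz̃ = h(z)ᵀh(z̃) for all z, z̃ ∈ Z and some κ > 0. Then there exists an orthogonal matrix A with f(g(z)) = √κ · Az for all z ∈ Z; in particular f inverts g on its image up to the orthogonal linear transformation √κ A. -/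
/-! The map `φ = (√κ)⁻¹ • f ∘ g` preserves inner products on the unit sphere. Extending its values
on an orthonormal basis linearly gives a linear isometry `A`, and for a unit vector `z` Parseval's
identity gives `⟪φ z, A z⟫ = ‖z‖² = ‖φ z‖ ‖A z‖`, which forces `φ z = A z`. -/

open Set
open scoped RealInnerProductSpace

variable {ι E F : Type*} [Fintype ι] [NormedAddCommGroup E] [InnerProductSpace ℝ E]
  [NormedAddCommGroup F] [InnerProductSpace ℝ F]

theorem OrthonormalBasis.exists_linearIsometry_eqOn_of_inner_map_map (b : OrthonormalBasis ι ℝ E)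
    {S : Set E} (hbS : ∀ i, b i ∈ S) {φ : E → F}
    (hφ : ∀ x ∈ S, ∀ y ∈ S, ⟪φ x, φ y⟫ = ⟪x, y⟫) :
    ∃ A : E →ₗᵢ[ℝ] F, EqOn φ A S := by
  classical
  have hon : Orthonormal ℝ (φ ∘ b) := by
    rw [orthonormal_iff_ite]
    intro i j
    rw [Function.comp_apply, Function.comp_apply, hφ _ (hbS i) _ (hbS j),
      ← orthonormal_iff_ite.mp b.orthonormal i j]
  have hconstr : b.toBasis.constr ℝ (φ ∘ b) ∘ b.toBasis = φ ∘ b :=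
    funext (b.toBasis.constr_basis ℝ _)
  let A : E →ₗᵢ[ℝ] F := (b.toBasis.constr ℝ (φ ∘ b)).isometryOfOrthonormal
    (b.coe_toBasis ▸ b.orthonormal) (hconstr ▸ hon)
  have hAb (i : ι) : A (b i) = φ (b i) := congrFun hconstr i
  refine ⟨A, fun z hz => ?_⟩
  have hAz : A z = ∑ i, ⟪b i, z⟫ • φ (b i) := by
    conv_lhs => rw [← b.sum_repr' z]
    simp only [map_sum, map_smul, hAb]
  have hinner : ⟪φ z, A z⟫ = ‖z‖ ^ 2 := by
    simp only [hAz, inner_sum, real_inner_smul_right, hφ _ hz _ (hbS _)]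
    rw [← real_inner_self_eq_norm_sq, ← b.sum_inner_mul_inner z z]
    exact Finset.sum_congr rfl fun i _ => by rw [real_inner_comm (b i), mul_comm]
  have hnorm : ‖φ z‖ ^ 2 = ‖z‖ ^ 2 := by
    rw [← real_inner_self_eq_norm_sq, ← real_inner_self_eq_norm_sq, hφ _ hz _ hz]
  have : ‖φ z - A z‖ ^ 2 = 0 := by
    rw [norm_sub_sq_real, hinner, hnorm, A.norm_map]
    ring
  exact sub_eq_zero.mp (norm_eq_zero.mp (pow_eq_zero_iff two_ne_zero |>.mp this))

theorem exists_linearIsometry_eqOn_sphere_of_inner_map_map [FiniteDimensional ℝ E] {φ : E → F}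
    (hφ : ∀ x ∈ Metric.sphere (0 : E) 1, ∀ y ∈ Metric.sphere (0 : E) 1, ⟪φ x, φ y⟫ = ⟪x, y⟫) :
    ∃ A : E →ₗᵢ[ℝ] F, EqOn φ A (Metric.sphere 0 1) :=
  (stdOrthonormalBasis ℝ E).exists_linearIsometry_eqOn_of_inner_map_map
    (fun i => by simp [(stdOrthonormalBasis ℝ E).orthonormal.1 i]) hφ

theorem stmt_18_general (N K : ℕ) (κ : ℝ) (hκ : 0 < κ)
    (g : EuclideanSpace ℝ (Fin N) → EuclideanSpace ℝ (Fin K))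
    (f : EuclideanSpace ℝ (Fin K) → EuclideanSpace ℝ (Fin N))
    (hdot : ∀ z z' : EuclideanSpace ℝ (Fin N), ‖z‖ = 1 → ‖z'‖ = 1 →
      κ * ⟪z, z'⟫ = ⟪f (g z), f (g z')⟫) :
    ∃ A : EuclideanSpace ℝ (Fin N) →ₗᵢ[ℝ] EuclideanSpace ℝ (Fin N),
      ∀ z : EuclideanSpace ℝ (Fin N), ‖z‖ = 1 →
        f (g z) = Real.sqrt κ • A z := by
  have hs : Real.sqrt κ ≠ 0 := (Real.sqrt_pos.mpr hκ).ne'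
  obtain ⟨A, hA⟩ := exists_linearIsometry_eqOn_sphere_of_inner_map_map
    (φ := fun z => (Real.sqrt κ)⁻¹ • f (g z)) fun x hx y hy => by
      rw [mem_sphere_zero_iff_norm] at hx hy
      rw [real_inner_smul_left, real_inner_smul_right, ← hdot x y hx hy, ← mul_assoc,
        ← mul_assoc, ← mul_inv, Real.mul_self_sqrt hκ.le, inv_mul_cancel₀ hκ.ne', one_mul]
  refine ⟨A, fun z hz => ?_⟩
  rw [← hA (mem_sphere_zero_iff_norm.mpr hz), smul_inv_smul₀ hs]

/-- if h = f ∘ g preserves the κ-scaled dot product on the unit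
sphere, then f ∘ g equals √κ · A for an orthogonal transformation A, i.e. f
inverts g up to an orthogonal linear transformation. -/
theorem stmt_18 (N K : ℕ) (hNK : N ≤ K) (κ : ℝ) (hκ : 0 < κ)
    (g : EuclideanSpace ℝ (Fin N) → EuclideanSpace ℝ (Fin K))
    (hg_inj : ∀ z z' : EuclideanSpace ℝ (Fin N), ‖z‖ = 1 → ‖z'‖ = 1 →
      g z = g z' → z = z')
    (hg_diff : Differentiable ℝ g)
    (f : EuclideanSpace ℝ (Fin K) → EuclideanSpace ℝ (Fin N))
    (hf_diff : Differentiable ℝ f)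
    (hf_sphere : ∀ z : EuclideanSpace ℝ (Fin N), ‖z‖ = 1 →
      ‖f (g z)‖ = Real.sqrt κ)
    (hdot : ∀ z z' : EuclideanSpace ℝ (Fin N), ‖z‖ = 1 → ‖z'‖ = 1 →
      κ * ⟪z, z'⟫ = ⟪f (g z), f (g z')⟫) :
    ∃ A : EuclideanSpace ℝ (Fin N) →ₗᵢ[ℝ] EuclideanSpace ℝ (Fin N),
      ∀ z : EuclideanSpace ℝ (Fin N), ‖z‖ = 1 →
        f (g z) = Real.sqrt κ • A z :=
  stmt_18_general N K κ hκ g f hdot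
end
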